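/- Let m_1, …, m_r be integers with each m_i ≥ 2. Then ∑_{i=1}^r (m_i − 1)/m_i ≥ 2 if and only if there exists a positive integer m such that −2m + ∑_{i=1}^r ⌊m(m_i − 1)/m_i⌋ ≥ 0. -/
import Mathlib


/-!
STATEMENT 6: Let m_1, …, m_r be integers with each m_i ≥ 2.  Then
∑_{i=1}^r (m_i − 1)/m_i ≥ 2 if and only if there exists a positive integer m
such that −2m + ∑_{i=1}^r ⌊m(m_i − 1)/m_i⌋ ≥ 0.

The floor ⌊m(m_i−1)/m_i⌋ is natural number division (all quantities are
nonnegative).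
-/

theorem stmt_6 (r : ℕ) (μ : Fin r → ℕ) (hμ : ∀ i, 2 ≤ μ i) :
    (2 : ℚ) ≤ ∑ i, ((μ i : ℚ) - 1) / (μ i) ↔
      ∃ m : ℕ, 0 < m ∧
        (0 : ℤ) ≤ -2 * (m : ℤ) + ∑ i, ((m * (μ i - 1)) / (μ i) : ℕ) := by
  have hμ0 : ∀ i, (0 : ℚ) < μ i := fun i => by
    exact_mod_cast lt_of_lt_of_le (by norm_num) (hμ i)
  have h1 : ∀ i : Fin r, ((μ i - 1 : ℕ) : ℚ) = (μ i : ℚ) - 1 := fun i => by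
    rw [Nat.cast_sub (show 1 ≤ μ i from le_trans (by norm_num) (hμ i)), Nat.cast_one]
  constructor
  · intro h
    have hMpos : 0 < ∏ i, μ i := Finset.prod_pos (fun i _ => lt_of_lt_of_le (by norm_num) (hμ i))
    refine ⟨∏ i, μ i, hMpos, ?_⟩
    set M := ∏ i, μ i with hM
    have hdvd : ∀ i : Fin r, μ i ∣ M := fun i => Finset.dvd_prod_of_mem μ (Finset.mem_univ i)
    have key : ∀ i : Fin r, ((M * (μ i - 1) / μ i : ℕ) : ℚ) = (M : ℚ) * ((μ i : ℚ) - 1) / μ i := by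
      intro i
      have hd : μ i ∣ M * (μ i - 1) := Dvd.dvd.mul_right (hdvd i) _
      rw [Nat.cast_div hd (by exact_mod_cast (hμ0 i).ne')]
      push_cast [h1 i]; ring
    have hnat : 2 * M ≤ ∑ i, M * (μ i - 1) / μ i := by
      rw [← @Nat.cast_le ℚ]
      push_cast
      rw [Finset.sum_congr rfl (fun i _ => key i)]
      have h2 : (M : ℚ) * 2 ≤ (M : ℚ) * ∑ i, ((μ i : ℚ) - 1) / μ i :=
        mul_le_mul_of_nonneg_left h (by positivity)
      rw [Finset.mul_sum] at h2
      calc (2 : ℚ) * M = (M : ℚ) * 2 := by ring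
        _ ≤ ∑ i, (M : ℚ) * (((μ i : ℚ) - 1) / μ i) := h2
        _ = ∑ i, (M : ℚ) * ((μ i : ℚ) - 1) / μ i := by
            apply Finset.sum_congr rfl; intro i _; ring
    omega
  · rintro ⟨m, hm, hle⟩
    have hmQ : (0 : ℚ) < m := by exact_mod_cast hm
    have hnat : 2 * m ≤ ∑ i, m * (μ i - 1) / μ i := by omega
    have key : ∀ i : Fin r, ((m * (μ i - 1) / μ i : ℕ) : ℚ) ≤ (m : ℚ) * (((μ i : ℚ) - 1) / μ i) := by
      intro i
      calc ((m * (μ i - 1) / μ i : ℕ) : ℚ) ≤ ((m * (μ i - 1) : ℕ) : ℚ) / (μ i : ℚ) :=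
            Nat.cast_div_le
        _ = (m : ℚ) * (((μ i : ℚ) - 1) / μ i) := by push_cast [h1 i]; ring
    have hsum : (2 : ℚ) * m ≤ (m : ℚ) * ∑ i, ((μ i : ℚ) - 1) / μ i := by
      have hc : ((∑ i, m * (μ i - 1) / μ i : ℕ) : ℚ) ≤ ∑ i, (m : ℚ) * (((μ i : ℚ) - 1) / μ i) := by
        push_cast
        exact Finset.sum_le_sum (fun i _ => key i)
      have hl : ((2 * m : ℕ) : ℚ) ≤ ((∑ i, m * (μ i - 1) / μ i : ℕ) : ℚ) := Nat.cast_le.mpr hnat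
      rw [Nat.cast_mul, Nat.cast_ofNat] at hl
      rw [Finset.mul_sum]
      linarith
    nlinarith [hsum]
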